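/- arXiv:1407.7878 — 3 statements merged into one kernel-verified Lean document; each statement's English description precedes it below -/
import Mathlib

section
/- Let R > 0 and let g : ℂ → ℂ be analytic on the open ball B(0,R) with g(0) = 0 and |g'(0)| > 1. Let μ ∈ ℂ with 0 < |μ| < 1, and suppose that the multiplicative semigroup generated by μ and g'(0), i.e. the set {μ^a · (g'(0))^b : a, b ∈ ℕ, a + b ≥ 1}, is dense in ℂ ∖ {0}. Then for every ν ∈ ℂ ∖ {0}, every ρ with 0 < ρ < R, and every ε > 0, there exist natural numbers r, s, t such that for every z with |z| ≤ ρ, the points μ^{r+s}·z, g(μ^{r+s}·z), g^{[2]}(μ^{r+s}·z), …, g^{[t-1]}(μ^{r+s}·z) all lie in B(0,R) (so the iterate g^{[t]}(μ^{r+s}·z) is defined), and |μ^{-s} · g^{[t]}(μ^{r+s}·z) − ν·z| < ε. -/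
/-!
Write `l = g'(0)`, so that `g w = l w + O(‖w‖²)` near `0`. As long as the linear orbit `l ^ k w`
stays in a small ball, the true orbit `g^[k] w` shadows it with error `D ‖l ^ k w‖²`; since
`‖l‖ > 1`, the linear part grows by `‖l‖²` in the squared scale while the new quadratic error is only
a fixed fraction of it, so the estimate propagates. With `w = μ ^ (r + s) z`, conjugating by `μ ^ s`
gives `‖μ⁻ˢ g^[t] (μ ^ (r + s) z) - μ ^ r l ^ t z‖ ≤ D ‖μ‖ ^ s ‖μ ^ r l ^ t z‖²`. Density makes
`μ ^ r l ^ t` close to `ν`, and then a large `s` makes the error small.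
-/

open Filter Topology Asymptotics

theorem AnalyticAt.isBigO_sub_sub_smul_deriv {𝕜 E : Type*} [NontriviallyNormedField 𝕜]
    [NormedAddCommGroup E] [NormedSpace 𝕜 E] {f : 𝕜 → E} {x : 𝕜} (hf : AnalyticAt 𝕜 f x) :
    (fun y => f (x + y) - f x - y • deriv f x) =O[𝓝 0] fun y => ‖y‖ ^ 2 := by
  obtain ⟨p, hp⟩ := hf
  convert hp.isBigO_sub_partialSum_pow 2 using 2 with y
  simp [FormalMultilinearSeries.partialSum, Finset.sum_range_succ, hp.deriv, sub_sub,
    ← hp.coeff_zero (fun _ => 1)]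

section Shadowing

variable {𝕜 : Type*} [NormedField 𝕜]

/-- The factor `(‖l‖ - 1) / 4` makes `4 · D (‖l‖ - 1) / 4 + ‖l‖ D ≤ ‖l‖² D`: the new quadratic error
of one step is absorbed by the growth of the linear part (`IsNearLinear.shadows_apply`). -/
structure IsNearLinear (g : 𝕜 → 𝕜) (l : 𝕜) (D δ : ℝ) : Prop where
  one_lt_norm : 1 < ‖l‖
  nonneg : 0 ≤ D
  mul_le_two : D * δ ≤ 2
  norm_sub_le : ∀ w, ‖w‖ ≤ δ → ‖g w - l * w‖ ≤ D * (‖l‖ - 1) / 4 * ‖w‖ ^ 2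

def Shadows (D : ℝ) (u v : 𝕜) : Prop :=
  ‖u - v‖ ≤ D * ‖v‖ ^ 2 ∧ ‖u‖ ≤ 2 * ‖v‖

theorem shadows_self {D : ℝ} (hD : 0 ≤ D) (v : 𝕜) : Shadows D v v :=
  ⟨by simp only [sub_self, norm_zero]; positivity, by linarith [norm_nonneg v]⟩

theorem norm_pow_mul_le_of_le {l : 𝕜} (hl : 1 ≤ ‖l‖) {k t : ℕ} (hkt : k ≤ t) (w : 𝕜) :
    ‖l ^ k * w‖ ≤ ‖l ^ t * w‖ := by
  simp only [norm_mul, norm_pow]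
  gcongr

namespace IsNearLinear

variable {g : 𝕜 → 𝕜} {l : 𝕜} {D δ : ℝ}

theorem shadows_apply (h : IsNearLinear g l D δ) {u v : 𝕜} (huv : Shadows D u v)
    (hv : 2 * ‖l * v‖ ≤ δ) : Shadows D (g u) (l * v) := by
  obtain ⟨hl, hD, hDδ, hquad⟩ := h
  obtain ⟨hclose, hsmall⟩ := huv
  rw [norm_mul] at hv
  have hu : ‖u‖ ≤ δ := by nlinarith [norm_nonneg v]
  have hgu : ‖g u - l * v‖ ≤ D * (‖l‖ * ‖v‖) ^ 2 :=
    calc ‖g u - l * v‖ ≤ ‖g u - l * u‖ + ‖l‖ * ‖u - v‖ := by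
          rw [← norm_mul, mul_sub]; exact norm_sub_le_norm_sub_add_norm_sub _ _ _
      _ ≤ D * (‖l‖ - 1) / 4 * (2 * ‖v‖) ^ 2 + ‖l‖ * (D * ‖v‖ ^ 2) := by
          gcongr
          exact (hquad u hu).trans (by gcongr)
      _ ≤ D * (‖l‖ * ‖v‖) ^ 2 := by
          nlinarith [mul_nonneg hD (sq_nonneg (‖l‖ - 1)), sq_nonneg ‖v‖]
  have hDlv : D * (‖l‖ * ‖v‖) ≤ 1 := by nlinarith
  rw [Shadows, norm_mul]
  refine ⟨hgu, ?_⟩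
  calc ‖g u‖ ≤ ‖g u - l * v‖ + ‖l * v‖ := norm_le_norm_sub_add _ _
    _ ≤ D * (‖l‖ * ‖v‖) ^ 2 + ‖l‖ * ‖v‖ := by rw [norm_mul]; gcongr
    _ ≤ 2 * (‖l‖ * ‖v‖) := by
        nlinarith [mul_le_mul_of_nonneg_right hDlv (by positivity : 0 ≤ ‖l‖ * ‖v‖)]

theorem shadows_iterate (h : IsNearLinear g l D δ) :
    ∀ (k : ℕ) (w : 𝕜), 2 * ‖l ^ k * w‖ ≤ δ → Shadows D (g^[k] w) (l ^ k * w)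
  | 0, w, _ => by simpa using shadows_self h.nonneg w
  | k + 1, w, hw => by
    have hk := norm_pow_mul_le_of_le h.one_lt_norm.le (k.le_add_right 1) w
    rw [pow_succ', mul_assoc] at hk hw
    rw [Function.iterate_succ_apply', pow_succ', mul_assoc]
    exact h.shadows_apply (h.shadows_iterate k w (by linarith)) hw

theorem norm_iterate_le_of_le (h : IsNearLinear g l D δ) {k t : ℕ} (hkt : k ≤ t) {w : 𝕜}
    (hw : 2 * ‖l ^ t * w‖ ≤ δ) : ‖g^[k] w‖ ≤ δ := by
  have hk := norm_pow_mul_le_of_le h.one_lt_norm.le hkt w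
  exact (h.shadows_iterate k w (by linarith)).2.trans (by linarith)

theorem norm_inv_pow_mul_iterate_sub_le (h : IsNearLinear g l D δ) {μ : 𝕜} (hμ : μ ≠ 0)
    (r s t : ℕ) {z : 𝕜} (hw : 2 * ‖l ^ t * (μ ^ (r + s) * z)‖ ≤ δ) :
    ‖(μ ^ s)⁻¹ * g^[t] (μ ^ (r + s) * z) - μ ^ r * l ^ t * z‖
      ≤ D * ‖μ‖ ^ s * ‖μ ^ r * l ^ t * z‖ ^ 2 := by
  set y := μ ^ r * l ^ t * z
  have hclose := (h.shadows_iterate t _ hw).1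
  rw [show l ^ t * (μ ^ (r + s) * z) = μ ^ s * y by ring] at hclose
  calc ‖(μ ^ s)⁻¹ * g^[t] (μ ^ (r + s) * z) - y‖
      = (‖μ‖ ^ s)⁻¹ * ‖g^[t] (μ ^ (r + s) * z) - μ ^ s * y‖ := by
        rw [← norm_pow, ← norm_inv, ← norm_mul, mul_sub, inv_mul_cancel_left₀ (pow_ne_zero _ hμ)]
    _ ≤ (‖μ‖ ^ s)⁻¹ * (D * ‖μ ^ s * y‖ ^ 2) := by gcongr
    _ = D * ‖μ‖ ^ s * ‖y‖ ^ 2 := by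
        rw [norm_mul, norm_pow]
        field_simp [norm_ne_zero_iff.2 hμ]

end IsNearLinear

end Shadowing

theorem AnalyticAt.exists_eventually_isNearLinear {𝕜 : Type*} [NontriviallyNormedField 𝕜]
    {g : 𝕜 → 𝕜} (hg : AnalyticAt 𝕜 g 0) (hg0 : g 0 = 0) (hl : 1 < ‖deriv g 0‖) :
    ∃ D, ∀ᶠ δ in 𝓝 0, IsNearLinear g (deriv g 0) D δ := by
  obtain ⟨C, hC, hCg⟩ := hg.isBigO_sub_sub_smul_deriv.exists_pos
  have hD : 4 * C / (‖deriv g 0‖ - 1) * (‖deriv g 0‖ - 1) / 4 = C := by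
    field_simp [(sub_pos.2 hl).ne']
  refine ⟨4 * C / (‖deriv g 0‖ - 1), ?_⟩
  have hsmall : ∀ᶠ δ in 𝓝 (0 : ℝ), 4 * C / (‖deriv g 0‖ - 1) * δ < 2 :=
    (continuous_const_mul _).tendsto' 0 0 (mul_zero _) |>.eventually (gt_mem_nhds two_pos)
  filter_upwards [hsmall, eventually_closedBall_subset hCg.bound] with δ hδ hball
  refine ⟨hl, by bound, hδ.le, fun w hw => ?_⟩
  simpa [hD, hg0, mul_comm w] using hball (mem_closedBall_zero_iff.2 hw)

theorem linear_approximation_general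
    (R : ℝ) (g : ℂ → ℂ)
    (hg : DifferentiableOn ℂ g (Metric.ball (0 : ℂ) R))
    (hg0 : g 0 = 0) (hg' : 1 < ‖deriv g 0‖)
    (μ : ℂ) (hμ0 : 0 < ‖μ‖) (hμ1 : ‖μ‖ < 1)
    (hdense : ∀ w : ℂ, w ≠ 0 →
      w ∈ closure {x : ℂ | ∃ a b : ℕ, 1 ≤ a + b ∧ x = μ ^ a * (deriv g 0) ^ b}) :
    ∀ ν : ℂ, ν ≠ 0 → ∀ ρ : ℝ, 0 < ρ → ρ < R → ∀ ε : ℝ, 0 < ε →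
      ∃ r s t : ℕ, ∀ z : ℂ, ‖z‖ ≤ ρ →
        (∀ k < t, g^[k] (μ ^ (r + s) * z) ∈ Metric.ball (0 : ℂ) R) ∧
        ‖(μ ^ s)⁻¹ * g^[t] (μ ^ (r + s) * z) - ν * z‖ < ε := by
  intro ν hν ρ hρ hρR ε hε
  have hR : 0 < R := hρ.trans hρR
  obtain ⟨D, hnear⟩ :=
    (hg.analyticAt (Metric.ball_mem_nhds 0 hR)).exists_eventually_isNearLinear hg0 hg'
  obtain ⟨δ, ⟨hlin, hδR⟩, hδ⟩ :=
    ((hnear.and (gt_mem_nhds hR)).filter_mono nhdsWithin_le_nhds |>.and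
      (self_mem_nhdsWithin (s := Set.Ioi 0))).exists
  obtain ⟨_, ⟨r, t, -, rfl⟩, hrt⟩ :=
    Metric.mem_closure_iff.1 (hdense ν hν) (ε / (2 * ρ)) (by positivity)
  set a := μ ^ r * deriv g 0 ^ t
  have hμs (c : ℝ) : Tendsto (fun s : ℕ => ‖μ‖ ^ s * c) atTop (𝓝 0) := by
    simpa using (tendsto_pow_atTop_nhds_zero_of_lt_one hμ0.le hμ1).mul_const c
  obtain ⟨s, hsδ, hsε⟩ := ((hμs (2 * (‖a‖ * ρ))).eventually_lt_const hδ |>.and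
    ((hμs (D * (‖a‖ * ρ) ^ 2)).eventually_lt_const (half_pos hε))).exists
  refine ⟨r, s, t, fun z hz => ?_⟩
  have haz : ‖a * z‖ ≤ ‖a‖ * ρ := by rw [norm_mul]; gcongr
  have hw : 2 * ‖deriv g 0 ^ t * (μ ^ (r + s) * z)‖ ≤ δ := by
    rw [show deriv g 0 ^ t * (μ ^ (r + s) * z) = μ ^ s * (a * z) by ring, norm_mul, norm_pow]
    nlinarith [pow_nonneg hμ0.le s]
  refine ⟨fun k hk => mem_ball_zero_iff.2 ((hlin.norm_iterate_le_of_le hk.le hw).trans_lt hδR), ?_⟩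
  calc ‖(μ ^ s)⁻¹ * g^[t] (μ ^ (r + s) * z) - ν * z‖
      ≤ ‖(μ ^ s)⁻¹ * g^[t] (μ ^ (r + s) * z) - a * z‖ + ‖a - ν‖ * ‖z‖ := by
        rw [← norm_mul, sub_mul]; exact norm_sub_le_norm_sub_add_norm_sub _ _ _
    _ ≤ D * ‖μ‖ ^ s * (‖a‖ * ρ) ^ 2 + ε / (2 * ρ) * ρ := by
        gcongr
        · exact (hlin.norm_inv_pow_mul_iterate_sub_le (norm_pos_iff.1 hμ0) r s t hw).trans
            (by have := hlin.nonneg; gcongr)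
        · rw [← dist_eq_norm, dist_comm]; exact hrt.le
    _ < ε / 2 + ε / 2 := add_lt_add_of_lt_of_le (by linarith) (le_of_eq (by field_simp))
    _ = ε := add_halves ε

/-- **Lemma 6 (Ilyashenko).** An expanding analytic germ `g` at `0`, pre- and post-composed
with contracting linear maps `z ↦ μ^k z`, approximates any linear map `z ↦ ν z`
uniformly on a fixed neighborhood of `0`, provided the multiplicative semigroup generated
by `μ` and `g'(0)` is dense in `ℂ \ {0}`. -/
theorem linear_approximation
    (R : ℝ) (hR : 0 < R) (g : ℂ → ℂ)
    (hg : DifferentiableOn ℂ g (Metric.ball (0 : ℂ) R))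
    (hg0 : g 0 = 0) (hg' : 1 < ‖deriv g 0‖)
    (μ : ℂ) (hμ0 : 0 < ‖μ‖) (hμ1 : ‖μ‖ < 1)
    (hdense : ∀ w : ℂ, w ≠ 0 →
      w ∈ closure {x : ℂ | ∃ a b : ℕ, 1 ≤ a + b ∧ x = μ ^ a * (deriv g 0) ^ b}) :
    ∀ ν : ℂ, ν ≠ 0 → ∀ ρ : ℝ, 0 < ρ → ρ < R → ∀ ε : ℝ, 0 < ε →
      ∃ r s t : ℕ, ∀ z : ℂ, ‖z‖ ≤ ρ →
        (∀ k < t, g^[k] (μ ^ (r + s) * z) ∈ Metric.ball (0 : ℂ) R) ∧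
        ‖(μ ^ s)⁻¹ * g^[t] (μ ^ (r + s) * z) - ν * z‖ < ε :=
  linear_approximation_general R g hg hg0 hg' μ hμ0 hμ1 hdense
end

section
/- Let n ∈ ℕ and let p, q ∈ ℂ[X] be polynomials with deg p ≤ n and deg q ≤ n. Set h = X·p − q, and suppose that h has n+1 distinct roots a₁, …, a_{n+1} in ℂ (equivalently, deg h = n+1 and all roots of h are simple). Then ∑_{j=1}^{n+1} p(a_j)/h'(a_j) = 1, where h' denotes the derivative of h. -/
/-!
Since `deg p, deg q ≤ n`, the polynomial `h = X·p − q` has degree at most `n + 1` and its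
coefficient of `X^(n+1)` is `p_n`, the coefficient of `X^n` in `p`. Having `n + 1` distinct
roots, `h = p_n · ∏ⱼ (X − aⱼ)`, with `p_n ≠ 0` as `h ≠ 0`. Lagrange interpolation of `p` at the
`aⱼ` reads off its coefficient of `X^n` as `∑ⱼ p(aⱼ) / ∏_{k≠j} (aⱼ − a_k) = p_n · ∑ⱼ p(aⱼ) / h'(aⱼ)`.
-/

open Polynomial Finset

namespace Lagrange

variable {F ι : Type*} [Field F] {s : Finset ι} {v : ι → F}

theorem coeff_eq_sum_div_eval_derivative_nodal [DecidableEq ι] (hvs : Set.InjOn v s)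
    {P : F[X]} (hP : P.degree < #s) :
    P.coeff (#s - 1) = ∑ i ∈ s, P.eval (v i) / (derivative (nodal s v)).eval (v i) := by
  rw [coeff_eq_sum hvs hP]
  refine sum_congr rfl fun i hi => ?_
  rw [eval_nodal_derivative_eval_node_eq hi, eval_nodal]

theorem eq_C_coeff_card_mul_nodal (hvs : Set.InjOn v s) {f : F[X]} (hf : f.degree ≤ #s)
    (hroots : ∀ i ∈ s, f.eval (v i) = 0) :
    f = C (f.coeff #s) * nodal s v := by
  refine eq_of_degree_sub_lt_of_eval_index_eq s hvs ?_ fun i hi => ?_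
  · rw [degree_lt_iff_coeff_zero]
    intro m hm
    rcases hm.eq_or_lt with rfl | hlt
    · rw [coeff_sub, coeff_C_mul, ← natDegree_nodal (v := v), nodal_monic.coeff_natDegree,
        mul_one, sub_self]
    · have hnodal : (nodal s v).degree < m := by rw [degree_nodal]; exact_mod_cast hlt
      rw [coeff_sub, coeff_C_mul, coeff_eq_zero_of_degree_lt (hf.trans_lt (by exact_mod_cast hlt)),
        coeff_eq_zero_of_degree_lt hnodal, mul_zero, sub_zero]
  · rw [hroots i hi, eval_mul, eval_nodal_at_node hi, mul_zero]

end Lagrange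

/-- For polynomials `p`, `q` of degree at most `n`, if `h = X·p − q` has `n + 1` distinct
roots `a j`, then `∑ j, p(a j) / h'(a j) = 1`.  (This is the relation `∑ λⱼ = 1` on the
characteristic numbers of the singular points at infinity of a polynomial foliation.) -/
theorem sum_characteristic_numbers_eq_one
    (n : ℕ) (p q : ℂ[X]) (hp : p.degree ≤ n) (hq : q.degree ≤ n)
    (h : ℂ[X]) (hh : h = X * p - q) (hh0 : h ≠ 0)
    (a : Fin (n + 1) → ℂ) (ha : Function.Injective a)
    (hroots : ∀ j, h.eval (a j) = 0) :
    ∑ j : Fin (n + 1), p.eval (a j) / (Polynomial.derivative h).eval (a j) = 1 := by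
  have hn : (n : WithBot ℕ) < ↑(n + 1) := by exact_mod_cast n.lt_succ_self
  have hdeg : h.degree ≤ ↑(n + 1) := by
    rw [hh]
    refine (degree_sub_le _ _).trans (max_le ?_ (hq.trans hn.le))
    refine (degree_mul_le _ _).trans ((add_le_add degree_X_le hp).trans_eq ?_)
    norm_cast
    rw [Nat.add_comm]
  have hlead : h.coeff (n + 1) = p.coeff n := by
    rw [hh, coeff_sub, coeff_X_mul, coeff_eq_zero_of_degree_lt (hq.trans_lt hn), sub_zero]
  have hfac : h = C (p.coeff n) * Lagrange.nodal univ a := by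
    have := Lagrange.eq_C_coeff_card_mul_nodal ha.injOn (s := univ) (by simpa using hdeg)
      (fun i _ => hroots i)
    rwa [card_univ, Fintype.card_fin, hlead] at this
  have hpn : p.coeff n ≠ 0 := fun h0 => hh0 (by rwa [h0, C_0, zero_mul] at hfac)
  have hinterp := Lagrange.coeff_eq_sum_div_eval_derivative_nodal ha.injOn (s := univ) (P := p)
    (by simpa using hp.trans_lt hn)
  simp only [card_univ, Fintype.card_fin, Nat.add_sub_cancel] at hinterp
  simp_rw [hfac, derivative_C_mul, eval_mul, eval_C, div_mul_eq_div_div_swap, ← sum_div,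
    ← hinterp, div_self hpn]
end

section
/- Let μ, λ ∈ ℂ with 0 < |μ| < 1 < |λ|, and suppose that the multiplicative semigroup generated by μ and λ, i.e. the set {μ^a λ^b : a, b ∈ ℕ, a + b ≥ 1}, is dense in ℂ ∖ {0}. Then for every ν ∈ ℂ ∖ {0}, every ε > 0 and every N ∈ ℕ, there exist natural numbers r ≥ N and t ≥ N such that |μ^r · λ^t − ν| < ε. -/
theorem exists_mul_near_of_inv_mul_mem_closure {K : Type*} [NormedDivisionRing K] {s : Set K}
    {c w : K} (hc : c ≠ 0) (hw : c⁻¹ * w ∈ closure s) {ε : ℝ} (hε : 0 < ε) :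
    ∃ x ∈ s, ‖c * x - w‖ < ε := by
  have hw' : w ∈ closure ((c * ·) '' s) := by
    simpa [mul_inv_cancel_left₀ hc] using
      map_mem_closure (continuous_const_mul c) hw (Set.mapsTo_image _ s)
  obtain ⟨_, ⟨x, hx, rfl⟩, hdist⟩ := Metric.mem_closure_iff.mp hw' ε hε
  exact ⟨x, hx, by rwa [dist_comm, dist_eq_norm] at hdist⟩

theorem dense_semigroup_large_exponents_general
    (μ lam : ℂ) (hμ0 : 0 < ‖μ‖)
    (hlam : 1 < ‖lam‖)
    (hdense : ∀ w : ℂ, w ≠ 0 →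
      w ∈ closure {x : ℂ | ∃ a b : ℕ, 1 ≤ a + b ∧ x = μ ^ a * lam ^ b}) :
    ∀ ν : ℂ, ν ≠ 0 → ∀ ε : ℝ, 0 < ε → ∀ N : ℕ,
      ∃ r t : ℕ, N ≤ r ∧ N ≤ t ∧ ‖μ ^ r * lam ^ t - ν‖ < ε := by
  intro ν hν ε hε N
  have hc : μ ^ N * lam ^ N ≠ 0 :=
    mul_ne_zero (pow_ne_zero _ (norm_pos_iff.mp hμ0))
      (pow_ne_zero _ (norm_pos_iff.mp (one_pos.trans hlam)))
  -- approximate `ν / (μ^N λ^N)` by the semigroup, then shift both exponents up by `N`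
  obtain ⟨_, ⟨a, b, -, rfl⟩, hclose⟩ := exists_mul_near_of_inv_mul_mem_closure hc
    (hdense _ (mul_ne_zero (inv_ne_zero hc) hν)) hε
  refine ⟨N + a, N + b, le_self_add, le_self_add, ?_⟩
  rwa [pow_add, pow_add, mul_mul_mul_comm]

/-- If `0 < |μ| < 1 < |λ|` and the multiplicative semigroup generated by `μ` and `λ` is
dense in `ℂ \ {0}`, then every nonzero `ν` can be approximated by products `μ^r · λ^t`
with both exponents arbitrarily large. -/
theorem dense_semigroup_large_exponents
    (μ lam : ℂ) (hμ0 : 0 < ‖μ‖) (hμ1 : ‖μ‖ < 1)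
    (hlam : 1 < ‖lam‖)
    (hdense : ∀ w : ℂ, w ≠ 0 →
      w ∈ closure {x : ℂ | ∃ a b : ℕ, 1 ≤ a + b ∧ x = μ ^ a * lam ^ b}) :
    ∀ ν : ℂ, ν ≠ 0 → ∀ ε : ℝ, 0 < ε → ∀ N : ℕ,
      ∃ r t : ℕ, N ≤ r ∧ N ≤ t ∧ ‖μ ^ r * lam ^ t - ν‖ < ε :=
  dense_semigroup_large_exponents_general μ lam hμ0 hlam hdense
end
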